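/- For each area Δ > 0 and point p = (1,0), every ellipse in ℝ² centered at the origin with area Δ and passing through p is tangent to both lines {y = Δ/π} and {y = −Δ/π}. -/

import Mathlib

/-!
The horizontal tangent lines of the conic `a x² + 2 b x y + c y² = 1` (with `a ≠ 0`) touch it
at the points where `a x + b y = 0`; substituting `x = -b y / a` shows they are `y = ±h` with
`h² (a c - b²) = a`. Passing through `(1, 0)` forces `a = 1`, and the area `π / √(a c - b²) = Δ`
gives `(Δ / π)² (a c - b²) = 1`, so `h = Δ / π`.
-/

theorem exists_horizontal_tangency {a b c h : ℝ} (ha : a ≠ 0) (hh : h ^ 2 * (a * c - b ^ 2) = a) :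
    ∃ x₀ : ℝ, a * x₀ ^ 2 + 2 * b * x₀ * h + c * h ^ 2 = 1 ∧ a * x₀ + b * h = 0 := by
  refine ⟨-b * h / a, ?_, by field_simp; ring⟩
  field_simp
  linear_combination hh

theorem sq_div_mul_eq_one_of_div_sqrt_eq {c D Δ : ℝ} (hc : c ≠ 0) (hD : 0 < D)
    (h : c / √D = Δ) : (Δ / c) ^ 2 * D = 1 := by
  rw [← h, div_div_cancel_left' hc, inv_pow, Real.sq_sqrt hD.le, inv_mul_cancel₀ hD.ne']

theorem hooke_ellipses_tangent_to_parallel_lines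
    (m₁₁ m₁₂ m₂₂ Δ : ℝ)
    (hdet : 0 < m₁₁ * m₂₂ - m₁₂ ^ 2)
    (harea : Real.pi / Real.sqrt (m₁₁ * m₂₂ - m₁₂ ^ 2) = Δ)
    (hthrough : m₁₁ * 1 ^ 2 + 2 * m₁₂ * 1 * 0 + m₂₂ * 0 ^ 2 = 1) :
    (∃ x₀ : ℝ,
        m₁₁ * x₀ ^ 2 + 2 * m₁₂ * x₀ * (Δ / Real.pi)
          + m₂₂ * (Δ / Real.pi) ^ 2 = 1 ∧
        m₁₁ * x₀ + m₁₂ * (Δ / Real.pi) = 0) ∧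
    (∃ x₀ : ℝ,
        m₁₁ * x₀ ^ 2 + 2 * m₁₂ * x₀ * (-(Δ / Real.pi))
          + m₂₂ * (-(Δ / Real.pi)) ^ 2 = 1 ∧
        m₁₁ * x₀ + m₁₂ * (-(Δ / Real.pi)) = 0) := by
  have hm₁₁ : m₁₁ = 1 := by simpa using hthrough
  have hheight : (Δ / Real.pi) ^ 2 * (m₁₁ * m₂₂ - m₁₂ ^ 2) = m₁₁ :=
    (sq_div_mul_eq_one_of_div_sqrt_eq Real.pi_ne_zero hdet harea).trans hm₁₁.symm
  have hm₁₁_ne : m₁₁ ≠ 0 := hm₁₁ ▸ one_ne_zero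
  exact ⟨exists_horizontal_tangency hm₁₁_ne hheight,
    exists_horizontal_tangency hm₁₁_ne (by rwa [neg_sq])⟩
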